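/- Let G be a minimal counterexample to the statement that all planar graphs have 3-weak-dynamic number at most 6, chosen with the fewest edges and, among those, the fewest vertices. Then G does not contain a triangle with vertices v_1, v_2, v_3 such that d(v_1) = d(v_2) = 3, d(v_3) ≥ 5, and each of v_1 and v_2 has exactly one neighbor of degree at least 4. -/

import Mathlib

open SimpleGraph

/-- `H` is a minor of `G`: there are nonempty, connected, pairwise disjoint branch sets
in `G`, with an edge of `G` between the branch sets of any two adjacent vertices of `H`. -/
def HasMinor {V W : Type} (G : SimpleGraph V) (H : SimpleGraph W) : Prop :=
  ∃ f : W → Set V,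
    (∀ w, (f w).Nonempty) ∧
    (∀ w, (G.induce (f w)).Connected) ∧
    (∀ w w', w ≠ w' → Disjoint (f w) (f w')) ∧
    (∀ w w', H.Adj w w' → ∃ a ∈ f w, ∃ b ∈ f w', G.Adj a b)

/-- A graph is planar iff it has no `K₅` minor and no `K_{3,3}` minor (Wagner's theorem). -/
def IsPlanar {V : Type} (G : SimpleGraph V) : Prop :=
  ¬ HasMinor G (⊤ : SimpleGraph (Fin 5)) ∧
  ¬ HasMinor G (completeBipartiteGraph (Fin 3) (Fin 3))

/-- The degree of a vertex `v`, the number of its neighbors. -/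
noncomputable def deg {V : Type} (G : SimpleGraph V) (v : V) : ℕ :=
  (G.neighborSet v).ncard

/-- `G` admits a `k`-weak-dynamic coloring with `n` colors: a (not necessarily proper)
coloring such that every vertex `v` sees at least `min k (d v)` colors on its neighborhood. -/
def WDColorable {V : Type} (G : SimpleGraph V) (k n : ℕ) : Prop :=
  ∃ c : V → Fin n, ∀ v, min k (deg G v) ≤ (c '' G.neighborSet v).ncard

/-!
Delete all edges at `v₁` and `v₂`. The resulting graph is planar with fewer edges, so it has a
3-weak-dynamic 6-coloring. The third neighbours `x` of `v₁` and `y` of `v₂` have degree at most 3,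
hence at most two neighbours left, so each can be recoloured away from the colour of `v₃`: a
neighbour that sees fewer than three other colours forbids at most two, so at most five colours
are excluded. Then put back the edges at `v₂` and at `v₁`, one vertex at a time; since `v₃` still
sees three colours, only `y`, respectively `v₂` and `x`, restrict the new colour, which leaves one
of the six colours free.
-/

open Function

namespace Set

variable {α ι : Type*}

theorem ncard_biUnion_le [Finite α] {S : Set ι} (hS : S.Finite) {B : ι → Set α} {m : ℕ}
    (hB : ∀ i ∈ S, (B i).ncard ≤ m) : (⋃ i ∈ S, B i).ncard ≤ m * S.ncard := by
  induction S, hS using Set.Finite.induction_on with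
  | empty => simp
  | @insert i S hi hS ih =>
    rw [biUnion_insert, ncard_insert_of_notMem hi hS, mul_add_one, add_comm]
    exact (ncard_union_le _ _).trans
      (add_le_add (hB i (mem_insert i S)) (ih fun j hj ↦ hB j (mem_insert_of_mem i hj)))

theorem exists_notMem_of_ncard_add_mul_lt [Finite α] {A : Set α} {S : Set ι} (hS : S.Finite)
    {B : ι → Set α} {m : ℕ} (hB : ∀ i ∈ S, (B i).ncard ≤ m)
    (h : A.ncard + m * S.ncard < Nat.card α) : ∃ t ∉ A, ∀ i ∈ S, t ∉ B i := by
  have hlt : (A ∪ ⋃ i ∈ S, B i).ncard < Nat.card α :=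
    (ncard_union_le _ _).trans_lt ((Nat.add_le_add_left (ncard_biUnion_le hS hB) _).trans_lt h)
  obtain ⟨t, ht⟩ : ∃ t, t ∉ A ∪ ⋃ i ∈ S, B i := by
    by_contra! hall
    rw [eq_univ_of_forall hall, ncard_univ] at hlt
    exact hlt.false
  simp only [mem_union, mem_iUnion, not_or, not_exists] at ht
  exact ⟨t, ht.1, ht.2⟩

theorem exists_eq_triple_of_ncard_eq_three {s : Set α} {a b : α} (hs : s.ncard = 3) (ha : a ∈ s)
    (hb : b ∈ s) (hab : a ≠ b) : ∃ x, x ≠ a ∧ x ≠ b ∧ s = {a, b, x} := by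
  have hsub : {a, b} ⊆ s := insert_subset ha (singleton_subset_iff.2 hb)
  obtain ⟨x, hx⟩ : ∃ x, s \ {a, b} = {x} := by
    rw [← ncard_eq_one, ncard_sdiff hsub, hs, ncard_pair hab]
  have hxs : x ∈ s \ {a, b} := hx ▸ mem_singleton x
  simp only [mem_sdiff, mem_insert_iff, mem_singleton_iff, not_or] at hxs
  refine ⟨x, hxs.2.1, hxs.2.2, ?_⟩
  rw [← union_sdiff_cancel hsub, hx, insert_union, singleton_union]

variable {V : Type*} [DecidableEq V] {c : V → α} {w : V} {t : α} {s : Set V}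

theorem image_update_of_notMem (h : w ∉ s) : update c w t '' s = c '' s :=
  image_congr fun _ hz ↦ update_of_ne (ne_of_mem_of_not_mem hz h) _ _

theorem image_update_of_mem (h : w ∈ s) : update c w t '' s = insert t (c '' (s \ {w})) := by
  conv_lhs => rw [← insert_sdiff_self_of_mem h]
  rw [image_insert_eq, update_self,
    image_update_of_notMem (notMem_sdiff_of_mem (mem_singleton w))]

theorem min_le_ncard_image_update_of_mem (hs : s.Finite) (hw : w ∈ s) {k m : ℕ}
    (hm : min k m ≤ (c '' (s \ {w})).ncard + 1)
    (ht : (c '' (s \ {w})).ncard < k → t ∉ c '' (s \ {w})) :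
    min k m ≤ (update c w t '' s).ncard := by
  have hfin : (c '' (s \ {w})).Finite := hs.sdiff.image c
  rw [image_update_of_mem hw]
  by_cases hsmall : (c '' (s \ {w})).ncard < k
  · rwa [ncard_insert_of_notMem (ht hsmall) hfin]
  · exact (min_le_left _ _).trans ((not_lt.1 hsmall).trans
      (ncard_le_ncard (subset_insert _ _) (hfin.insert t)))

end Set

theorem HasMinor.mono_left {V W : Type} {G G' : SimpleGraph V} {K : SimpleGraph W} (h : G ≤ G')
    (hG : HasMinor G K) : HasMinor G' K := by
  obtain ⟨f, hne, hconn, hdisj, hadj⟩ := hG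
  refine ⟨f, hne, fun w ↦ (hconn w).mono fun _ _ hab ↦ h hab, hdisj, fun w w' hww' ↦ ?_⟩
  obtain ⟨a, ha, b, hb, hab⟩ := hadj w w' hww'
  exact ⟨a, ha, b, hb, h hab⟩

theorem IsPlanar.anti {V : Type} {G G' : SimpleGraph V} (h : G ≤ G') (hG' : IsPlanar G') :
    IsPlanar G :=
  ⟨fun hK ↦ hG'.1 (hK.mono_left h), fun hK ↦ hG'.2 (hK.mono_left h)⟩

section Degree

variable {V : Type} {G : SimpleGraph V} {u v : V}

theorem neighborSet_deleteIncidenceSet_of_ne (h : u ≠ v) :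
    (G.deleteIncidenceSet v).neighborSet u = G.neighborSet u \ {v} := by
  ext w
  simp [deleteIncidenceSet_adj, h]

variable [Finite V]

theorem deg_mono {G' : SimpleGraph V} (h : G ≤ G') (v : V) : deg G v ≤ deg G' v :=
  Set.ncard_le_ncard fun _ hw ↦ h hw

theorem deg_deleteIncidenceSet_add_one (h : G.Adj u v) :
    deg (G.deleteIncidenceSet v) u + 1 = deg G u := by
  rw [deg, deg, neighborSet_deleteIncidenceSet_of_ne h.ne,
    Set.ncard_sdiff_singleton_add_one (show v ∈ G.neighborSet u from h)]

theorem deg_deleteIncidenceSet_lt (h : G.Adj u v) : deg (G.deleteIncidenceSet v) u < deg G u :=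
  Nat.lt_of_succ_le (deg_deleteIncidenceSet_add_one h).le

theorem ncard_edgeSet_deleteIncidenceSet_lt (h : G.Adj u v) :
    (G.deleteIncidenceSet v).edgeSet.ncard < G.edgeSet.ncard :=
  Set.ncard_lt_ncard <| edgeSet_ssubset_edgeSet.2 <| (deleteIncidenceSet_le G v).lt_of_ne
    fun he ↦ (deleteIncidenceSet_adj.1 (he.symm ▸ h)).2.2 rfl

end Degree

def IsWDColoring {V α : Type} (G : SimpleGraph V) (k : ℕ) (c : V → α) : Prop :=
  ∀ v, min k (deg G v) ≤ (c '' G.neighborSet v).ncard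

namespace IsWDColoring

variable {V α : Type} [Finite V] [DecidableEq V] {G : SimpleGraph V} {k : ℕ} {c : V → α} {w : V}
  {t : α}

theorem update (hc : IsWDColoring G k c)
    (ht : ∀ u ∈ G.neighborSet w,
      (c '' (G.neighborSet u \ {w})).ncard < k → t ∉ c '' (G.neighborSet u \ {w})) :
    IsWDColoring G k (Function.update c w t) := by
  intro v
  by_cases hw : w ∈ G.neighborSet v
  · refine Set.min_le_ncard_image_update_of_mem (Set.toFinite _) hw ?_ (ht v (G.adj_symm hw))
    calc min k (deg G v) ≤ (c '' G.neighborSet v).ncard := hc v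
      _ = (insert (c w) (c '' (G.neighborSet v \ {w}))).ncard := by
        rw [← Set.image_update_of_mem hw, update_eq_self]
      _ ≤ _ := Set.ncard_insert_le _ _
  · rw [Set.image_update_of_notMem hw]
    exact hc v

theorem update_of_deleteIncidenceSet (hc : IsWDColoring (G.deleteIncidenceSet w) k c)
    (hw : min k (deg G w) ≤ (c '' G.neighborSet w).ncard)
    (ht : ∀ u ∈ G.neighborSet w, (c '' (G.deleteIncidenceSet w).neighborSet u).ncard < k →
      t ∉ c '' (G.deleteIncidenceSet w).neighborSet u) :
    IsWDColoring G k (Function.update c w t) := by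
  intro u
  by_cases hu : w ∈ G.neighborSet u
  · have hN := neighborSet_deleteIncidenceSet_of_ne (G := G) (G.ne_of_adj hu)
    refine Set.min_le_ncard_image_update_of_mem (Set.toFinite _) hu ?_
      (hN ▸ ht u (G.adj_symm hu))
    have hdeg := deg_deleteIncidenceSet_add_one hu
    have hcu := hc u
    rw [hN] at hcu
    omega
  · rw [Set.image_update_of_notMem hu]
    rcases eq_or_ne u w with rfl | huw
    · exact hw
    · have hN : (G.deleteIncidenceSet w).neighborSet u = G.neighborSet u := by
        rw [neighborSet_deleteIncidenceSet_of_ne huw, Set.sdiff_singleton_eq_self hu]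
      simpa only [deg, hN] using hc u

variable [Finite α]

theorem exists_update (hc : IsWDColoring G k c) (w : V) {A : Set α}
    (h : A.ncard + (k - 1) * deg G w < Nat.card α) :
    ∃ t ∉ A, IsWDColoring G k (Function.update c w t) := by
  let S := {u ∈ G.neighborSet w | (c '' (G.neighborSet u \ {w})).ncard < k}
  have hS : S.ncard ≤ deg G w := Set.ncard_le_ncard (Set.sep_subset _ _)
  obtain ⟨t, htA, htS⟩ := Set.exists_notMem_of_ncard_add_mul_lt (Set.toFinite S)
    (B := fun u ↦ c '' (G.neighborSet u \ {w})) (fun u hu ↦ Nat.le_sub_one_of_lt hu.2)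
    (h.trans_le' (by gcongr))
  exact ⟨t, htA, hc.update fun u hu hsmall ↦ htS u ⟨hu, hsmall⟩⟩

theorem exists_update_of_deleteIncidenceSet (hc : IsWDColoring (G.deleteIncidenceSet w) k c)
    (hw : min k (deg G w) ≤ (c '' G.neighborSet w).ncard) {A : Set α} {S : Set V}
    (hS : ∀ u ∈ G.neighborSet w,
      (c '' (G.deleteIncidenceSet w).neighborSet u).ncard < k → u ∈ S)
    (h : A.ncard + (k - 1) * S.ncard < Nat.card α) :
    ∃ t ∉ A, IsWDColoring G k (Function.update c w t) := by
  let T := {u ∈ G.neighborSet w | (c '' (G.deleteIncidenceSet w).neighborSet u).ncard < k}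
  have hT : T.ncard ≤ S.ncard := Set.ncard_le_ncard fun u hu ↦ hS u hu.1 hu.2
  obtain ⟨t, htA, htT⟩ := Set.exists_notMem_of_ncard_add_mul_lt (Set.toFinite T)
    (B := fun u ↦ c '' (G.deleteIncidenceSet w).neighborSet u)
    (fun u hu ↦ Nat.le_sub_one_of_lt hu.2) (h.trans_le' (by gcongr))
  exact ⟨t, htA, hc.update_of_deleteIncidenceSet hw fun u hu hsmall ↦ htT u ⟨hu, hsmall⟩⟩

theorem exists_ne_of_ne (hc : IsWDColoring G k c) {x y z : V} (hxz : x ≠ z) (hyz : y ≠ z)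
    (hx : 1 + (k - 1) * deg G x < Nat.card α)
    (hy : 1 + (k - 1) * deg G y < Nat.card α) :
    ∃ c' : V → α, IsWDColoring G k c' ∧ c' x ≠ c' z ∧ c' y ≠ c' z := by
  obtain ⟨t, ht, hc₁⟩ := hc.exists_update x (A := {c z}) (by rwa [Set.ncard_singleton])
  obtain ⟨u, hu, hc₂⟩ := hc₁.exists_update y (A := {Function.update c x t z})
    (by rwa [Set.ncard_singleton])
  refine ⟨_, hc₂, ?_, by simpa [update_of_ne hyz.symm] using hu⟩
  rcases eq_or_ne x y with rfl | hxy
  · simpa [update_of_ne hxz.symm] using hu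
  · simpa [update_of_ne hxy, update_of_ne hxz.symm, update_of_ne hyz.symm] using ht

end IsWDColoring

theorem deg_lt_of_ncard_eq_one {V : Type} {G : SimpleGraph V} {k : ℕ} {v w u : V}
    (hA : {u | G.Adj v u ∧ k ≤ deg G u}.ncard = 1) (hw : G.Adj v w) (hwk : k ≤ deg G w)
    (hu : G.Adj v u) (huw : u ≠ w) : deg G u < k := by
  obtain ⟨a, ha⟩ := Set.ncard_eq_one.1 hA
  by_contra! huk
  have hwa : w ∈ ({a} : Set V) := ha ▸ ⟨hw, hwk⟩
  have hua : u ∈ ({a} : Set V) := ha ▸ ⟨hu, huk⟩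
  exact huw (hua.trans hwa.symm)

theorem wdColorable_of_isWDColoring_deleteIncidenceSet {V : Type} [Finite V] [DecidableEq V]
    {G : SimpleGraph V} {v₁ v₂ v₃ x y : V} (hN₁ : G.neighborSet v₁ = {v₂, v₃, x})
    (hN₂ : G.neighborSet v₂ = {v₁, v₃, y}) (hx₂ : x ≠ v₂) (hy₁ : y ≠ v₁) (hy₃ : y ≠ v₃)
    (h₃ : 5 ≤ deg G v₃)
    {c : V → Fin 6} (hc : IsWDColoring ((G.deleteIncidenceSet v₁).deleteIncidenceSet v₂) 3 c)
    (hcx : c x ≠ c v₃) (hcy : c y ≠ c v₃) :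
    WDColorable G 3 6 := by
  have h₁₂ : G.Adj v₁ v₂ := show v₂ ∈ G.neighborSet v₁ by simp [hN₁]
  have h₁₃ : G.Adj v₁ v₃ := show v₃ ∈ G.neighborSet v₁ by simp [hN₁]
  have h₂₃ : G.Adj v₂ v₃ := show v₃ ∈ G.neighborSet v₂ by simp [hN₂]
  have hN₂' : (G.deleteIncidenceSet v₁).neighborSet v₂ = {v₃, y} := by
    rw [neighborSet_deleteIncidenceSet_of_ne h₁₂.ne', hN₂, Set.insert_sdiff_self_of_notMem]
    simp [h₁₃.ne, hy₁.symm]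
  -- `v₃` keeps at least three neighbours in both reduced graphs, so it never restricts a colour.
  have hd₃' := deg_deleteIncidenceSet_add_one h₁₃.symm
  have hd₃'' := deg_deleteIncidenceSet_add_one (G := G.deleteIncidenceSet v₁)
    (deleteIncidenceSet_adj.2 ⟨h₂₃.symm, h₁₃.ne', h₁₂.ne'⟩)
  obtain ⟨b, hb, hc'⟩ := hc.exists_update_of_deleteIncidenceSet (A := {c v₃, c x}) (S := {y})
    (by
      rw [hN₂', deg, hN₂', Set.image_pair, Set.ncard_pair hy₃.symm, Set.ncard_pair hcy.symm]
      exact min_le_right 3 2)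
    (by
      rw [hN₂']
      rintro u (rfl | rfl) hsmall
      · have := hc u
        omega
      · rfl)
    ((Nat.add_le_add_right (Set.ncard_insert_le _ _) _).trans_lt (by simp))
  simp only [Set.mem_insert_iff, Set.mem_singleton_iff, not_or] at hb
  have hv₁ : min 3 (deg G v₁) ≤ (update c v₂ b '' G.neighborSet v₁).ncard := by
    rw [hN₁, Set.image_insert_eq, Set.image_pair, update_self, update_of_ne h₂₃.ne',
      update_of_ne hx₂, Set.ncard_insert_of_notMem (by simp [hb]), Set.ncard_pair hcx.symm]
    exact min_le_left 3 _
  have hS₁ : ∀ u ∈ G.neighborSet v₁,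
      (update c v₂ b '' (G.deleteIncidenceSet v₁).neighborSet u).ncard < 3 →
        u ∈ ({v₂, x} : Set V) := by
    rw [hN₁]
    rintro u (rfl | rfl | rfl) hsmall
    · simp
    · have := hc' u
      omega
    · simp
  obtain ⟨a, -, hc''⟩ := hc'.exists_update_of_deleteIncidenceSet hv₁ hS₁ (A := ∅)
    ((Nat.add_le_add_left (Nat.mul_le_mul_left _ (Set.ncard_insert_le _ _)) _).trans_lt
      (by simp))
  exact ⟨_, hc''⟩

theorem minCounterexample_no_triangle_deg5_top_general {V : Type} [Fintype V] (G : SimpleGraph V)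
    (hplanar : IsPlanar G) (hcex : ¬ WDColorable G 3 6)
    (hminEdges : ∀ (W : Type) [Fintype W] (H : SimpleGraph W),
      IsPlanar H → H.edgeSet.ncard < G.edgeSet.ncard → WDColorable H 3 6) :
    ¬ ∃ v₁ v₂ v₃ : V,
      G.Adj v₁ v₂ ∧ G.Adj v₂ v₃ ∧ G.Adj v₁ v₃ ∧
      deg G v₁ = 3 ∧ deg G v₂ = 3 ∧ 5 ≤ deg G v₃ ∧
      {u : V | G.Adj v₁ u ∧ 4 ≤ deg G u}.ncard = 1 ∧
      {u : V | G.Adj v₂ u ∧ 4 ≤ deg G u}.ncard = 1 := by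
  classical
  rintro ⟨v₁, v₂, v₃, h₁₂, h₂₃, h₁₃, hd₁, hd₂, hd₃, hA₁, hA₂⟩
  obtain ⟨x, hx₂, hx₃, hN₁⟩ := Set.exists_eq_triple_of_ncard_eq_three hd₁ h₁₂ h₁₃ h₂₃.ne
  obtain ⟨y, hy₁, hy₃, hN₂⟩ := Set.exists_eq_triple_of_ncard_eq_three hd₂ h₁₂.symm h₂₃ h₁₃.ne
  have h₁x : G.Adj v₁ x := show x ∈ G.neighborSet v₁ by simp [hN₁]
  have h₂y : G.Adj v₂ y := show y ∈ G.neighborSet v₂ by simp [hN₂]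
  have hdx := deg_lt_of_ncard_eq_one hA₁ h₁₃ (by omega) h₁x hx₃
  have hdy := deg_lt_of_ncard_eq_one hA₂ h₂₃ (by omega) h₂y hy₃
  let G' := G.deleteIncidenceSet v₁
  let H := G'.deleteIncidenceSet v₂
  have hHG' : H ≤ G' := deleteIncidenceSet_le G' v₂
  have hG'G : G' ≤ G := deleteIncidenceSet_le G v₁
  have hH : H.edgeSet.ncard < G.edgeSet.ncard :=
    (ncard_edgeSet_deleteIncidenceSet_lt (deleteIncidenceSet_adj.2
      ⟨h₂₃.symm, h₁₃.ne', h₁₂.ne'⟩)).trans_le (Set.ncard_le_ncard (edgeSet_mono hG'G))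
  obtain ⟨c₀, hc₀⟩ := hminEdges V H (hplanar.anti (hHG'.trans hG'G)) hH
  have hdx' : deg H x < deg G x :=
    (deg_mono hHG' x).trans_lt (deg_deleteIncidenceSet_lt h₁x.symm)
  have hdy' : deg H y < deg G y :=
    (deg_deleteIncidenceSet_lt (deleteIncidenceSet_adj.2 ⟨h₂y.symm, hy₁, h₁₂.ne'⟩)).trans_le
      (deg_mono hG'G y)
  obtain ⟨c, hc, hcx, hcy⟩ := IsWDColoring.exists_ne_of_ne hc₀ hx₃ hy₃
    (by rw [Nat.card_fin]; omega) (by rw [Nat.card_fin]; omega)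
  exact hcex
    (wdColorable_of_isWDColoring_deleteIncidenceSet hN₁ hN₂ hx₂ hy₁ hy₃ hd₃ hc hcx hcy)

/-- A minimal counterexample contains no triangle v₁v₂v₃ with d(v₁) = d(v₂) = 3, d(v₃) ≥ 5, in which each of v₁ and v₂ has exactly one neighbor of degree at least 4. -/
theorem minCounterexample_no_triangle_deg5_top {V : Type} [Fintype V] (G : SimpleGraph V)
    (hplanar : IsPlanar G) (hcex : ¬ WDColorable G 3 6)
    (hminEdges : ∀ (W : Type) [Fintype W] (H : SimpleGraph W),
      IsPlanar H → H.edgeSet.ncard < G.edgeSet.ncard → WDColorable H 3 6)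
    (hminVerts : ∀ (W : Type) [Fintype W] (H : SimpleGraph W),
      IsPlanar H → ¬ WDColorable H 3 6 → H.edgeSet.ncard = G.edgeSet.ncard →
      Nat.card V ≤ Nat.card W) :
    ¬ ∃ v₁ v₂ v₃ : V,
      G.Adj v₁ v₂ ∧ G.Adj v₂ v₃ ∧ G.Adj v₁ v₃ ∧
      deg G v₁ = 3 ∧ deg G v₂ = 3 ∧ 5 ≤ deg G v₃ ∧
      {u : V | G.Adj v₁ u ∧ 4 ≤ deg G u}.ncard = 1 ∧
      {u : V | G.Adj v₂ u ∧ 4 ≤ deg G u}.ncard = 1 :=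
  minCounterexample_no_triangle_deg5_top_general G hplanar hcex hminEdges
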